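/- Let h ≥ 0 and suppose real numbers t_v ≥ √3/2 with weights n_v ≥ 1 satisfy −∑_v 6 n_v log t_v − ∑_v n_v log|Δ(t_v)| ≤ 12 d h, where log|Δ(t_v)| ≤ −2π t_v. If moreover log t_v ≤ t_v/e for each v, then ∑_v n_v t_v ≤ (12/(2π − 6/e))·d·h ≤ 3·d·h. -/

import Mathlib

open Real Finset

/- Each term satisfies `n_v L_v ≤ -2π n_v t_v` and `6 n_v log t_v ≤ (6/e) n_v t_v`, so the left-hand
side of the hypothesis is at least `(2π - 6/e) ∑ n_v t_v`; numerically `2π - 6/e ≥ 4`. -/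

theorem mul_sum_le_neg_sum_sub_sum {ι : Type*} (s : Finset ι) {a b k : ℝ} (hk : 0 ≤ k)
    {t n g L : ι → ℝ} (hn : ∀ v ∈ s, 0 ≤ n v) (hL : ∀ v ∈ s, L v ≤ -a * t v)
    (hg : ∀ v ∈ s, g v ≤ t v / b) :
    (a - k / b) * ∑ v ∈ s, n v * t v ≤ -∑ v ∈ s, k * n v * g v - ∑ v ∈ s, n v * L v := by
  rw [mul_sum, ← sum_neg_distrib, ← sum_sub_distrib]
  refine sum_le_sum fun v hv => ?_
  have hnL : n v * L v ≤ n v * (-a * t v) := mul_le_mul_of_nonneg_left (hL v hv) (hn v hv)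
  have hng : k * n v * g v ≤ k * n v * (t v / b) :=
    mul_le_mul_of_nonneg_left (hg v hv) (mul_nonneg hk (hn v hv))
  have hsplit : (a - k / b) * (n v * t v) = n v * (a * t v) - k * n v * (t v / b) := by ring
  linarith

theorem four_le_two_mul_pi_sub_six_div_exp_one : 4 ≤ 2 * π - 6 / exp 1 := by
  have he := exp_one_gt_d9
  have hπ := pi_gt_d6
  have h6e : 6 / exp 1 < 2.21 := by
    rw [div_lt_iff₀ (exp_pos 1)]
    linarith
  linarith

theorem sum_weighted_t_le_general {ι : Type*} [Fintype ι] (d : ℕ)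
    (h : ℝ) (hh : 0 ≤ h) (t n L : ι → ℝ)
    (hn : ∀ v, 1 ≤ n v)
    (hL : ∀ v, L v ≤ -(2 * Real.pi) * t v)
    (hmain : -∑ v, 6 * n v * Real.log (t v) - ∑ v, n v * L v ≤ 12 * d * h)
    (hlog : ∀ v, Real.log (t v) ≤ t v / Real.exp 1) :
    (∑ v, n v * t v) ≤ 12 / (2 * Real.pi - 6 / Real.exp 1) * d * h ∧
      12 / (2 * Real.pi - 6 / Real.exp 1) * d * h ≤ 3 * d * h := by
  have hc := four_le_two_mul_pi_sub_six_div_exp_one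
  have hcpos : 0 < 2 * π - 6 / exp 1 := by linarith
  have hsum : (2 * π - 6 / exp 1) * ∑ v, n v * t v ≤ 12 * d * h :=
    (mul_sum_le_neg_sum_sub_sum univ (by norm_num) (fun v _ => by linarith [hn v])
      (fun v _ => hL v) (fun v _ => hlog v)).trans hmain
  have hdh : 0 ≤ (d : ℝ) * h := by positivity
  have h12 : 12 / (2 * π - 6 / exp 1) ≤ 3 := by
    rw [div_le_iff₀ hcpos]
    linarith
  constructor
  · rw [mul_assoc, div_mul_eq_mul_div, le_div_iff₀ hcpos, ← mul_assoc]
    linarith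
  · rw [mul_assoc, mul_assoc]
    exact mul_le_mul_of_nonneg_right h12 hdh

/-- Let `h ≥ 0`, `d ≥ 1` an integer, and suppose reals `t_v ≥ √3/2` with weights
`n_v ≥ 1` (over a finite index set) satisfy
`−∑ 6 n_v log t_v − ∑ n_v L_v ≤ 12 d h`, where `L_v = log|Δ(t_v)| ≤ −2π t_v`.
If moreover `log t_v ≤ t_v/e` for each `v`, then
`∑ n_v t_v ≤ (12/(2π − 6/e))·d·h ≤ 3·d·h`. -/
theorem sum_weighted_t_le {ι : Type*} [Fintype ι] (d : ℕ) (hd : 1 ≤ d)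
    (h : ℝ) (hh : 0 ≤ h) (t n L : ι → ℝ)
    (ht : ∀ v, Real.sqrt 3 / 2 ≤ t v) (hn : ∀ v, 1 ≤ n v)
    (hL : ∀ v, L v ≤ -(2 * Real.pi) * t v)
    (hmain : -∑ v, 6 * n v * Real.log (t v) - ∑ v, n v * L v ≤ 12 * d * h)
    (hlog : ∀ v, Real.log (t v) ≤ t v / Real.exp 1) :
    (∑ v, n v * t v) ≤ 12 / (2 * Real.pi - 6 / Real.exp 1) * d * h ∧
      12 / (2 * Real.pi - 6 / Real.exp 1) * d * h ≤ 3 * d * h :=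
  sum_weighted_t_le_general d h hh t n L hn hL hmain hlog
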